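/- Let σ > 0 and c ≥ 0. Let Θ be uniformly distributed on [−π, π), let Z ~ CN(0, σ²), and assume Θ and Z are independent. Then the modulus |W| of W = c·e^{iΘ} + Z has density on (0, ∞), with respect to Lebesgue measure, given by r ↦ (2r/σ²) · exp(−(r² + c²)/σ²) · I₀(2rc/σ²). -/

import Mathlib

open MeasureTheory ProbabilityTheory Real ENNReal

/-- The modified Bessel function of the first kind of order zero:
`I₀(x) = (1/(2π)) ∫_{−π}^{π} e^{x cos θ} dθ`. -/
noncomputable def I0 (x : ℝ) : ℝ := (1 / (2 * π)) * ∫ θ in (-π)..π, Real.exp (x * Real.cos θ)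

/-! The law of `Z` has density `(πσ²)⁻¹ exp(-|z|²/σ²)` on `ℂ`. Averaging its translates
by `c e^{iθ}` over the uniform angle gives `W` the radial density
`(πσ²)⁻¹ exp(-(|w|² + c²)/σ²) I₀(2|w|c/σ²)`, since
`|w - c e^{iθ}|² = |w|² + c² - 2|w|c cos(arg w - θ)` and, by periodicity, the integral of
`exp(k cos(φ - θ))` over a period is `2π I₀(k)` whatever `φ` is. Polar coordinates then
turn a radial density `f(|w|)` on `ℂ` into the density `2πr f(r)` of `|W|` on `(0, ∞)`. -/

theorem MeasureTheory.MeasurePreserving.map_withDensity {α β : Type*} [MeasurableSpace α]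
    [MeasurableSpace β] {μ : Measure α} {ν : Measure β} {e : α ≃ᵐ β}
    (he : MeasurePreserving e μ ν) (f : α → ℝ≥0∞) :
    (μ.withDensity f).map e = ν.withDensity (f ∘ e.symm) := by
  ext s hs
  rw [Measure.map_apply e.measurable hs, withDensity_apply _ (e.measurable hs),
    withDensity_apply _ hs, ← he.setLIntegral_comp_preimage_emb e.measurableEmbedding]
  simp

theorem map_add_prod_withDensity {α G : Type*} [MeasurableSpace α] [AddCommGroup G]
    [MeasurableSpace G] [MeasurableAdd₂ G] [MeasurableSub₂ G] (ν : Measure α) [SFinite ν]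
    (ρ : Measure G) [SFinite ρ] [ρ.IsAddLeftInvariant] {a : α → G} (ha : Measurable a)
    {g : G → ℝ≥0∞} (hg : Measurable g) :
    (ν.prod (ρ.withDensity g)).map (fun p => a p.1 + p.2)
      = ρ.withDensity fun w => ∫⁻ x, g (w - a x) ∂ν := by
  have hF : Measurable fun p : α × G => a p.1 + p.2 := by fun_prop
  ext s hs
  rw [Measure.map_apply hF hs, ← lintegral_indicator_one (hF hs),
    lintegral_prod _ ((measurable_one.indicator (hF hs)).aemeasurable),
    withDensity_apply _ hs, ← lintegral_indicator hs]
  calc _ = ∫⁻ x, ∫⁻ w, s.indicator 1 w * g (w - a x) ∂ρ ∂ν := by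
        refine lintegral_congr fun x => ?_
        have hsx : Measurable fun z => s.indicator (1 : G → ℝ≥0∞) (a x + z) :=
          (measurable_one.indicator hs).comp (measurable_const_add (a x))
        change ∫⁻ z, s.indicator 1 (a x + z) ∂ρ.withDensity g = _
        rw [lintegral_withDensity_eq_lintegral_mul _ hg hsx,
          ← lintegral_add_left_eq_self (fun w => s.indicator 1 w * g (w - a x)) (a x)]
        refine lintegral_congr fun z => ?_
        simp [Set.indicator, mul_comm]
    _ = ∫⁻ w, s.indicator (fun w => ∫⁻ x, g (w - a x) ∂ν) w ∂ρ := by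
        rw [lintegral_lintegral_swap (by fun_prop)]
        refine lintegral_congr fun w => ?_
        by_cases hw : w ∈ s <;> simp [hw]

theorem map_norm_withDensity_comp_norm {f : ℝ → ℝ≥0∞} (hf : Measurable f) :
    ((volume : Measure ℂ).withDensity fun z => f ‖z‖).map (‖·‖)
      = (volume.restrict (Set.Ioi 0)).withDensity
          fun r => ENNReal.ofReal (2 * π * r) * f r := by
  ext s hs
  rw [Measure.map_apply measurable_norm hs, withDensity_apply _ (measurable_norm hs),
    withDensity_apply _ hs, ← lintegral_indicator (measurable_norm hs),
    ← lintegral_indicator hs]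
  change ∫⁻ z, s.indicator f ‖z‖ = _
  have hpolar : ∀ p ∈ polarCoord.target,
      ENNReal.ofReal p.1 • s.indicator f ‖Complex.polarCoord.symm p‖
        = ENNReal.ofReal p.1 * s.indicator f p.1 := fun p hp => by
    rw [Complex.norm_polarCoord_symm, abs_of_pos hp.1, smul_eq_mul]
  rw [← Complex.lintegral_comp_polarCoord_symm, setLIntegral_congr_fun
    polarCoord.open_target.measurableSet hpolar, polarCoord_target, Measure.volume_eq_prod,
    ← Measure.prod_restrict, lintegral_prod _ (by fun_prop)]
  refine lintegral_congr fun r => ?_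
  dsimp only
  rw [setLIntegral_const, Real.volume_Ioo, show π - -π = 2 * π by ring]
  by_cases hr : r ∈ s <;> simp [hr, ENNReal.ofReal_mul two_pi_pos.le]
  ring

noncomputable def complexGaussianPDF (σ : ℝ) (z : ℂ) : ℝ :=
  (π * σ ^ 2)⁻¹ * exp (-‖z‖ ^ 2 / σ ^ 2)

theorem gaussianPDFReal_re_mul_gaussianPDFReal_im (σ : ℝ) (z : ℂ) :
    gaussianPDFReal 0 (σ ^ 2 / 2).toNNReal z.re * gaussianPDFReal 0 (σ ^ 2 / 2).toNNReal z.im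
      = complexGaussianPDF σ z := by
  have hv : ((σ ^ 2 / 2).toNNReal : ℝ) = σ ^ 2 / 2 := Real.coe_toNNReal _ (by positivity)
  have hnorm : ‖z‖ ^ 2 = z.re ^ 2 + z.im ^ 2 := by
    rw [Complex.sq_norm, Complex.normSq_apply]; ring
  simp only [gaussianPDFReal, hv, sub_zero, complexGaussianPDF, hnorm]
  rw [mul_mul_mul_comm, ← Real.exp_add, ← mul_inv, Real.mul_self_sqrt (by positivity)]
  congr 1
  · ring
  · congr 1
    ring

theorem map_eq_withDensity_complexGaussianPDF {Ω : Type*} [MeasurableSpace Ω] {μ : Measure Ω}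
    [IsFiniteMeasure μ] {σ : ℝ} (hσ : σ ≠ 0) {Z : Ω → ℂ} (hZ : Measurable Z)
    (hre : μ.map (fun ω => (Z ω).re) = gaussianReal 0 (σ ^ 2 / 2).toNNReal)
    (him : μ.map (fun ω => (Z ω).im) = gaussianReal 0 (σ ^ 2 / 2).toNNReal)
    (hind : IndepFun (fun ω => (Z ω).re) (fun ω => (Z ω).im) μ) :
    μ.map Z = volume.withDensity fun z => ENNReal.ofReal (complexGaussianPDF σ z) := by
  have hv : (σ ^ 2 / 2).toNNReal ≠ 0 := by
    simpa only [ne_eq, Real.toNNReal_eq_zero, not_le] using by positivity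
  have hG := measurable_gaussianPDF 0 (σ ^ 2 / 2).toNNReal
  have hre_meas : Measurable fun ω => (Z ω).re := by fun_prop
  have him_meas : Measurable fun ω => (Z ω).im := by fun_prop
  have hprod : μ.map (fun ω => ((Z ω).re, (Z ω).im)) = volume.withDensity fun p =>
      gaussianPDF 0 (σ ^ 2 / 2).toNNReal p.1 * gaussianPDF 0 (σ ^ 2 / 2).toNNReal p.2 := by
    rw [hind.map_prod_eq_prod_map_map hre_meas.aemeasurable him_meas.aemeasurable, hre, him,
      gaussianReal_of_var_ne_zero _ hv, prod_withDensity hG hG, ← Measure.volume_eq_prod]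
  calc μ.map Z
      = (μ.map fun ω => ((Z ω).re, (Z ω).im)).map Complex.measurableEquivRealProd.symm := by
        rw [Measure.map_map Complex.measurableEquivRealProd.symm.measurable (hre_meas.prodMk him_meas)]
        rfl
    _ = _ := by
      rw [hprod, Complex.volume_preserving_equiv_real_prod.symm.map_withDensity]
      refine congrArg _ (funext fun z => ?_)
      simp [gaussianPDF, ← ENNReal.ofReal_mul (gaussianPDFReal_nonneg _ _ _),
        gaussianPDFReal_re_mul_gaussianPDFReal_im]

theorem continuous_I0 : Continuous I0 :=
  continuous_const.mul <| intervalIntegral.continuous_parametric_intervalIntegral_of_continuous'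
    (by fun_prop) _ _

theorem intervalIntegral_exp_mul_cos_sub (k φ : ℝ) :
    ∫ θ in (-π)..π, exp (k * cos (φ - θ)) = 2 * π * I0 k := by
  have hper : Function.Periodic (fun u => exp (k * cos u)) (2 * π) := fun u => by
    simp [cos_add_two_pi]
  rw [intervalIntegral.integral_comp_sub_left (fun u => exp (k * cos u)) φ,
    show φ - -π = φ - π + 2 * π by ring, hper.intervalIntegral_add_eq (φ - π) (-π),
    show -π + 2 * π = π by ring, I0]
  field_simp

theorem setLIntegral_Ico_exp_mul_cos_sub (k φ : ℝ) :
    ∫⁻ θ in Set.Ico (-π) π, ENNReal.ofReal (exp (k * cos (φ - θ)))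
      = ENNReal.ofReal (2 * π * I0 k) := by
  rw [← ofReal_integral_eq_lintegral_ofReal _ (.of_forall fun _ => (exp_pos _).le),
    integral_Ico_eq_integral_Ioo, ← integral_Ioc_eq_integral_Ioo,
    ← intervalIntegral.integral_of_le (by linarith [pi_pos]), intervalIntegral_exp_mul_cos_sub]
  exact (Continuous.integrableOn_Icc (by fun_prop)).mono_set Set.Ico_subset_Icc_self

theorem norm_sub_ofReal_mul_exp_sq (w : ℂ) (c θ : ℝ) :
    ‖w - c * Complex.exp (θ * Complex.I)‖ ^ 2
      = ‖w‖ ^ 2 + c ^ 2 - 2 * ‖w‖ * c * cos (Complex.arg w - θ) := by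
  have hre : (w - c * Complex.exp (θ * Complex.I)).re
      = ‖w‖ * cos (Complex.arg w) - c * cos θ := by
    simp [Complex.norm_mul_cos_arg, Complex.exp_ofReal_mul_I_re]
  have him : (w - c * Complex.exp (θ * Complex.I)).im
      = ‖w‖ * sin (Complex.arg w) - c * sin θ := by
    simp [Complex.norm_mul_sin_arg, Complex.exp_ofReal_mul_I_im]
  rw [Complex.sq_norm, Complex.normSq_apply, hre, him, cos_sub]
  linear_combination ‖w‖ ^ 2 * sin_sq_add_cos_sq (Complex.arg w) + c ^ 2 * sin_sq_add_cos_sq θ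

theorem complexGaussianPDF_sub_ofReal_mul_exp (σ c θ : ℝ) (w : ℂ) :
    complexGaussianPDF σ (w - c * Complex.exp (θ * Complex.I))
      = (π * σ ^ 2)⁻¹ * exp (-(‖w‖ ^ 2 + c ^ 2) / σ ^ 2)
        * exp (2 * ‖w‖ * c / σ ^ 2 * cos (Complex.arg w - θ)) := by
  rw [complexGaussianPDF, norm_sub_ofReal_mul_exp_sq, mul_assoc ((π * σ ^ 2)⁻¹), ← exp_add]
  ring_nf

theorem lintegral_complexGaussianPDF_sub_uniform (σ c : ℝ) (w : ℂ) :
    ∫⁻ θ, ENNReal.ofReal (complexGaussianPDF σ (w - c * Complex.exp (θ * Complex.I)))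
        ∂((ENNReal.ofReal (2 * π))⁻¹ • volume.restrict (Set.Ico (-π) π))
      = ENNReal.ofReal ((π * σ ^ 2)⁻¹ * exp (-(‖w‖ ^ 2 + c ^ 2) / σ ^ 2)
          * I0 (2 * ‖w‖ * c / σ ^ 2)) := by
  have hA : 0 ≤ (π * σ ^ 2)⁻¹ * exp (-(‖w‖ ^ 2 + c ^ 2) / σ ^ 2) := by positivity
  simp_rw [lintegral_smul_measure, complexGaussianPDF_sub_ofReal_mul_exp, ENNReal.ofReal_mul hA]
  rw [lintegral_const_mul _ (by fun_prop), setLIntegral_Ico_exp_mul_cos_sub,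
    ENNReal.ofReal_mul two_pi_pos.le, smul_eq_mul, mul_left_comm,
    ← mul_assoc _ (ENNReal.ofReal (2 * π)),
    ENNReal.inv_mul_cancel (by simp [pi_pos]) ENNReal.ofReal_ne_top, one_mul]

theorem stmt3_general {Ω : Type*} [MeasurableSpace Ω] (μ : Measure Ω) [IsProbabilityMeasure μ]
    (σ c : ℝ) (hσ : 0 < σ)
    (Θ : Ω → ℝ) (Z : Ω → ℂ) (hΘm : Measurable Θ) (hZm : Measurable Z)
    (hΘ : μ.map Θ = (ENNReal.ofReal (2 * π))⁻¹ • volume.restrict (Set.Ico (-π) π))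
    (hZre : μ.map (fun ω => (Z ω).re) = gaussianReal 0 (Real.toNNReal (σ ^ 2 / 2)))
    (hZim : μ.map (fun ω => (Z ω).im) = gaussianReal 0 (Real.toNNReal (σ ^ 2 / 2)))
    (hZind : IndepFun (fun ω => (Z ω).re) (fun ω => (Z ω).im) μ)
    (hind : IndepFun Θ Z μ) :
    μ.map (fun ω => ‖(c : ℂ) * Complex.exp ((Θ ω : ℂ) * Complex.I) + Z ω‖)
      = (volume.restrict (Set.Ioi (0:ℝ))).withDensity (fun r => ENNReal.ofReal
          ((2 * r / σ ^ 2) * Real.exp (-(r ^ 2 + c ^ 2) / σ ^ 2) * I0 (2 * r * c / σ ^ 2))) := by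
  set W : ℝ × ℂ → ℂ := fun p => (c : ℂ) * Complex.exp ((p.1 : ℂ) * Complex.I) + p.2
  have hW : Measurable W := by fun_prop
  have hlaw : (μ.map fun ω => (Θ ω, Z ω)).map W
      = volume.withDensity fun w => ENNReal.ofReal ((π * σ ^ 2)⁻¹
          * exp (-(‖w‖ ^ 2 + c ^ 2) / σ ^ 2) * I0 (2 * ‖w‖ * c / σ ^ 2)) := by
    rw [hind.map_prod_eq_prod_map_map hΘm.aemeasurable hZm.aemeasurable, hΘ,
      map_eq_withDensity_complexGaussianPDF hσ.ne' hZm hZre hZim hZind,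
      map_add_prod_withDensity _ _ (a := fun θ : ℝ => (c : ℂ) * Complex.exp (θ * Complex.I))
        (by fun_prop) (by unfold complexGaussianPDF; fun_prop)]
    simp_rw [lintegral_complexGaussianPDF_sub_uniform]
  change μ.map ((‖·‖) ∘ W ∘ fun ω => (Θ ω, Z ω)) = _
  rw [← Measure.map_map measurable_norm (hW.comp (hΘm.prodMk hZm)),
    ← Measure.map_map hW (hΘm.prodMk hZm), hlaw,
    map_norm_withDensity_comp_norm (f := fun r => ENNReal.ofReal ((π * σ ^ 2)⁻¹
      * exp (-(r ^ 2 + c ^ 2) / σ ^ 2) * I0 (2 * r * c / σ ^ 2)))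
      (by have := continuous_I0; fun_prop)]
  refine withDensity_congr_ae <| (ae_restrict_mem measurableSet_Ioi).mono fun r (hr : 0 < r) => ?_
  dsimp only
  rw [← ENNReal.ofReal_mul (by positivity)]
  congr 1
  field_simp

/-- If `Θ` is uniform on `[−π, π)`, `Z ~ CN(0, σ²)`, and `Θ` and `Z` are independent, then
the modulus of `W = c·e^{iΘ} + Z` has density
`r ↦ (2r/σ²)·exp(−(r²+c²)/σ²)·I₀(2rc/σ²)` on `(0, ∞)` with respect to Lebesgue measure. -/
theorem stmt3 {Ω : Type*} [MeasurableSpace Ω] (μ : Measure Ω) [IsProbabilityMeasure μ]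
    (σ c : ℝ) (hσ : 0 < σ) (hc : 0 ≤ c)
    (Θ : Ω → ℝ) (Z : Ω → ℂ) (hΘm : Measurable Θ) (hZm : Measurable Z)
    (hΘ : μ.map Θ = (ENNReal.ofReal (2 * π))⁻¹ • volume.restrict (Set.Ico (-π) π))
    (hZre : μ.map (fun ω => (Z ω).re) = gaussianReal 0 (Real.toNNReal (σ ^ 2 / 2)))
    (hZim : μ.map (fun ω => (Z ω).im) = gaussianReal 0 (Real.toNNReal (σ ^ 2 / 2)))
    (hZind : IndepFun (fun ω => (Z ω).re) (fun ω => (Z ω).im) μ)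
    (hind : IndepFun Θ Z μ) :
    μ.map (fun ω => ‖(c : ℂ) * Complex.exp ((Θ ω : ℂ) * Complex.I) + Z ω‖)
      = (volume.restrict (Set.Ioi (0:ℝ))).withDensity (fun r => ENNReal.ofReal
          ((2 * r / σ ^ 2) * Real.exp (-(r ^ 2 + c ^ 2) / σ ^ 2) * I0 (2 * r * c / σ ^ 2))) :=
  stmt3_general μ σ c hσ Θ Z hΘm hZm hΘ hZre hZim hZind hind
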